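/- arXiv:0808.0059 — 3 statements merged into one kernel-verified Lean document; each statement's English description precedes it below -/
import Mathlib

section
/- Let H be a finite-dimensional complex inner product space and let A, B be subspaces of H. For a subspace K, write ref(K) = 2Π_K − Id, where Π_K is the orthogonal projection onto K. Suppose u ∈ A and v ∈ B are unit vectors and θ ∈ (0, π/2) is such that Π_A v = (cos θ) u and Π_B u = (cos θ) v. Then W = ref(B) ∘ ref(A) satisfies W(u − e^{iθ} v) = e^{2iθ}(u − e^{iθ} v) and W(u − e^{−iθ} v) = e^{−2iθ}(u − e^{−iθ} v); that is, e^{±2iθ} are eigenvalues of W with the indicated eigenvectors. -/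
/-- The orthogonal projection onto a subspace, as an operator on the whole space. -/
noncomputable def projOp {H : Type*} [NormedAddCommGroup H] [InnerProductSpace ℂ H]
    [FiniteDimensional ℂ H] (K : Submodule ℂ H) : H →L[ℂ] H :=
  K.subtypeL.comp (K.orthogonalProjection)

/-- The reflection `ref(K) = 2Π_K − Id` through a subspace `K`. -/
noncomputable def reflOp {H : Type*} [NormedAddCommGroup H] [InnerProductSpace ℂ H]
    [FiniteDimensional ℂ H] (K : Submodule ℂ H) : H →L[ℂ] H :=
  2 • projOp K - 1

lemma projOp_eq_self {H : Type*} [NormedAddCommGroup H] [InnerProductSpace ℂ H]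
    [FiniteDimensional ℂ H] {K : Submodule ℂ H} {x : H} (hx : x ∈ K) :
    projOp K x = x := by
  simp [projOp, ← Submodule.starProjection_apply, Submodule.starProjection_eq_self_iff.2 hx]

lemma reflOp_apply {H : Type*} [NormedAddCommGroup H] [InnerProductSpace ℂ H]
    [FiniteDimensional ℂ H] (K : Submodule ℂ H) (x : H) :
    reflOp K x = (2 : ℂ) • projOp K x - x := by
  simp [reflOp, two_smul]

theorem szegedy_rotation_eigenvectors {H : Type*} [NormedAddCommGroup H]
    [InnerProductSpace ℂ H] [FiniteDimensional ℂ H] (A B : Submodule ℂ H)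
    (u v : H) (hu : u ∈ A) (hv : v ∈ B) (hun : ‖u‖ = 1) (hvn : ‖v‖ = 1)
    (θ : ℝ) (hθ : θ ∈ Set.Ioo 0 (Real.pi / 2))
    (hAv : projOp A v = (Real.cos θ : ℂ) • u)
    (hBu : projOp B u = (Real.cos θ : ℂ) • v) :
    (reflOp B) ((reflOp A) (u - Complex.exp (θ * Complex.I) • v)) =
      Complex.exp (2 * θ * Complex.I) • (u - Complex.exp (θ * Complex.I) • v) ∧
    (reflOp B) ((reflOp A) (u - Complex.exp (-θ * Complex.I) • v)) =
      Complex.exp (-(2 * θ) * Complex.I) • (u - Complex.exp (-θ * Complex.I) • v) := by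
  have hA : projOp A u = u := projOp_eq_self hu
  have hB : projOp B v = v := projOp_eq_self hv
  set c : ℂ := (Real.cos θ : ℂ) with hc
  set e : ℂ := Complex.exp (θ * Complex.I) with he
  set e' : ℂ := Complex.exp (-θ * Complex.I) with he'
  have h2c : 2 * c = e + e' := by
    rw [he, he', Complex.exp_mul_I, Complex.exp_mul_I, hc, Complex.ofReal_cos]
    have : Complex.cos (-θ) = Complex.cos θ := Complex.cos_neg _
    rw [this, Complex.sin_neg]
    ring
  have hee : e * e' = 1 := by
    rw [he, he', ← Complex.exp_add]
    simp
  have he2 : Complex.exp (2 * θ * Complex.I) = e * e := by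
    rw [he, ← Complex.exp_add]; ring_nf
  have he2' : Complex.exp (-(2 * θ) * Complex.I) = e' * e' := by
    rw [he', ← Complex.exp_add]; ring_nf
  constructor
  · simp only [reflOp_apply, map_sub, map_smul, smul_sub, hA, hB, hAv, hBu, he2]
    match_scalars
    · linear_combination (1 - 2*c*e - e^2 - e*e') * h2c + (-2*e - e') * hee
    · linear_combination e * h2c + hee
  · simp only [reflOp_apply, map_sub, map_smul, smul_sub, hA, hB, hAv, hBu, he2']
    match_scalars
    · linear_combination (1 - 2*c*e' - e'^2 - e*e') * h2c + (-2*e' - e) * hee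
    · linear_combination e' * h2c + hee
end

section
/- Let n and r be integers with 1 ≤ r and 2r ≤ n. Then every eigenvalue of the real adjacency matrix of the Johnson graph J(n,r) is of the form (r−j)(n−r−j) − j for some integer j with 0 ≤ j ≤ r, and conversely each number (r−j)(n−r−j) − j with 0 ≤ j ≤ r is an eigenvalue of this adjacency matrix. -/
open scoped symmDiff

/-- The Johnson graph `J(n,r)`: vertices are the `r`-element subsets of `{1,…,n}`,
two vertices being adjacent iff their symmetric difference has size 2. -/
def johnsonGraph (n r : ℕ) : SimpleGraph {S : Finset (Fin n) // S.card = r} where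
  Adj s t := (s.1 ∆ t.1).card = 2
  symm := ⟨fun s t h => by rwa [symmDiff_comm]⟩
  loopless := ⟨fun s h => by simp only [symmDiff_self] at h; simp at h⟩

instance (n r : ℕ) : DecidableRel (johnsonGraph n r).Adj :=
  fun s t => inferInstanceAs (Decidable ((s.1 ∆ t.1).card = 2))

namespace JohnsonAux

open Finset Matrix

abbrev K (n r : ℕ) := {S : Finset (Fin n) // S.card = r}

/-- inclusion matrix from `(r+1)`-sets to `r`-sets -/
noncomputable def W (n r : ℕ) : Matrix (K n (r+1)) (K n r) ℝ :=
  fun S T => if T.1 ⊆ S.1 then 1 else 0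

lemma mem_spectrum_iff_exists {m : Type*} [Fintype m] [DecidableEq m]
    (M : Matrix m m ℝ) (μ : ℝ) :
    μ ∈ spectrum ℝ M ↔ ∃ v : m → ℝ, v ≠ 0 ∧ M.mulVec v = μ • v := by
  rw [spectrum.mem_iff, Algebra.algebraMap_eq_smul_one, Matrix.isUnit_iff_isUnit_det,
    isUnit_iff_ne_zero, not_not, ← Matrix.exists_mulVec_eq_zero_iff]
  constructor
  · rintro ⟨v, hv, h⟩
    refine ⟨v, hv, ?_⟩
    rw [Matrix.sub_mulVec, Matrix.smul_mulVec, Matrix.one_mulVec, sub_eq_zero] at h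
    exact h.symm
  · rintro ⟨v, hv, h⟩
    refine ⟨v, hv, ?_⟩
    rw [Matrix.sub_mulVec, Matrix.smul_mulVec, Matrix.one_mulVec, sub_eq_zero]
    exact h.symm

lemma sum_subset_indicator {n : ℕ} (r : ℕ) (X : Finset (Fin n)) :
    (∑ U : K n r, if U.1 ⊆ X then (1:ℝ) else 0) = (X.card.choose r : ℕ) := by
  rw [Finset.sum_boole]
  norm_cast
  rw [← Finset.card_powersetCard]
  apply Finset.card_bij (fun (U : K n r) _ => U.1)
  · intro U hU
    rw [Finset.mem_filter] at hU
    rw [Finset.mem_powersetCard]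
    exact ⟨hU.2, U.2⟩
  · intro U _ V _ h
    exact Subtype.ext h
  · intro V hV
    rw [Finset.mem_powersetCard] at hV
    exact ⟨⟨V, hV.2⟩, Finset.mem_filter.mpr ⟨Finset.mem_univ _, hV.1⟩, rfl⟩

lemma card_supersets {n : ℕ} (k : ℕ) (X : Finset (Fin n)) (hX : X.card ≤ k) :
    (Finset.univ.filter (fun U : K n k => X ⊆ U.1)).card
      = (n - X.card).choose (k - X.card) := by
  have hc : (Xᶜ : Finset (Fin n)).card = n - X.card := by
    rw [Finset.card_compl, Fintype.card_fin]
  rw [← hc, ← Finset.card_powersetCard]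
  apply Finset.card_bij (fun (U : K n k) _ => U.1 \ X)
  · intro U hU
    rw [Finset.mem_filter] at hU
    rw [Finset.mem_powersetCard]
    constructor
    · intro a ha
      rw [Finset.mem_sdiff] at ha
      exact Finset.mem_compl.mpr ha.2
    · rw [Finset.card_sdiff_of_subset hU.2, U.2]
  · intro U hU V hV h
    rw [Finset.mem_filter] at hU hV
    apply Subtype.ext
    rw [← Finset.sdiff_union_of_subset hU.2, ← Finset.sdiff_union_of_subset hV.2, h]
  · intro V hV
    rw [Finset.mem_powersetCard] at hV
    have hdisj : Disjoint V X := by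
      rw [Finset.disjoint_left]
      intro a ha
      exact Finset.mem_compl.mp (hV.1 ha)
    have hcard : (V ∪ X).card = k := by
      rw [Finset.card_union_of_disjoint hdisj, hV.2]
      omega
    refine ⟨⟨V ∪ X, hcard⟩, Finset.mem_filter.mpr ⟨Finset.mem_univ _, Finset.subset_union_right⟩, ?_⟩
    exact Finset.union_sdiff_cancel_right hdisj

lemma card_symmDiff_key {n : ℕ} (S T : Finset (Fin n)) :
    (S ∆ T).card + 2 * (S ∩ T).card = S.card + T.card := by
  have h1 := Finset.card_union_add_card_inter S T
  have h2 : S ∆ T = (S ∪ T) \ (S ∩ T) := by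
    rw [symmDiff_eq_sup_sdiff_inf]; rfl
  have h3 : S ∩ T ⊆ S ∪ T := (Finset.inter_subset_left).trans Finset.subset_union_left
  have h4 : (S ∆ T).card = (S ∪ T).card - (S ∩ T).card := by
    rw [h2, Finset.card_sdiff_of_subset h3]
  have h5 := Finset.card_le_card h3
  omega

lemma inter_eq_of_card {n : ℕ} {r : ℕ} (S T : K n r) (h : (S.1 ∩ T.1).card = r) :
    S = T := by
  have h1 : S.1 ∩ T.1 = S.1 :=
    Finset.eq_of_subset_of_card_le Finset.inter_subset_left (by rw [h, S.2])
  have h2 : S.1 ∩ T.1 = T.1 :=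
    Finset.eq_of_subset_of_card_le Finset.inter_subset_right (by rw [h, T.2])
  exact Subtype.ext (h1 ▸ h2)

lemma W_mul_Wt {n : ℕ} (r : ℕ) :
    W n r * (W n r)ᵀ
      = (johnsonGraph n (r+1)).adjMatrix ℝ + ((r:ℝ)+1) • (1 : Matrix (K n (r+1)) (K n (r+1)) ℝ) := by
  ext S T
  have hsum : ∀ U : K n r,
      (if U.1 ⊆ S.1 then (1:ℝ) else 0) * (if U.1 ⊆ T.1 then (1:ℝ) else 0)
        = if U.1 ⊆ S.1 ∩ T.1 then (1:ℝ) else 0 := by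
    intro U
    by_cases h1 : U.1 ⊆ S.1 <;> by_cases h2 : U.1 ⊆ T.1 <;>
      simp [h1, h2, Finset.subset_inter_iff]
  have hlhs : (W n r * (W n r)ᵀ) S T = ((S.1 ∩ T.1).card.choose r : ℕ) := by
    rw [Matrix.mul_apply]
    simp only [W, Matrix.transpose_apply]
    rw [Finset.sum_congr rfl (fun U _ => hsum U)]
    exact sum_subset_indicator r _
  rw [hlhs]
  have key := card_symmDiff_key S.1 T.1
  rw [S.2, T.2] at key
  have hle : (S.1 ∩ T.1).card ≤ r + 1 := by
    have h : (S.1 ∩ T.1).card ≤ S.1.card := Finset.card_le_card Finset.inter_subset_left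
    rw [S.2] at h; exact h
  simp only [Matrix.add_apply, SimpleGraph.adjMatrix_apply, Matrix.smul_apply,
    Matrix.one_apply, smul_eq_mul]
  by_cases hST : S = T
  · subst hST
    have hAdj : ¬ (johnsonGraph n (r+1)).Adj S S := (johnsonGraph n (r+1)).loopless.irrefl S
    rw [if_neg hAdj, if_pos rfl]
    rw [Finset.inter_self, S.2, Nat.choose_succ_self_right]
    push_cast; ring
  · by_cases hAdj : (johnsonGraph n (r+1)).Adj S T
    · have h2 : (S.1 ∆ T.1).card = 2 := hAdj
      have : (S.1 ∩ T.1).card = r := by omega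
      rw [if_pos hAdj, if_neg hST, this, Nat.choose_self]
      push_cast; ring
    · have h2 : (S.1 ∆ T.1).card ≠ 2 := hAdj
      have hne : (S.1 ∩ T.1).card ≠ r + 1 := fun h => hST (inter_eq_of_card S T h)
      have hlt : (S.1 ∩ T.1).card < r := by omega
      rw [if_neg hAdj, if_neg hST, Nat.choose_eq_zero_of_lt hlt]
      push_cast; ring

lemma Wt_mul_W {n : ℕ} (r : ℕ) (hrn : r + 1 ≤ n) :
    (W n r)ᵀ * W n r
      = (johnsonGraph n r).adjMatrix ℝ + ((n:ℝ) - r) • (1 : Matrix (K n r) (K n r) ℝ) := by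
  ext S T
  have hsum : ∀ U : K n (r+1),
      (if S.1 ⊆ U.1 then (1:ℝ) else 0) * (if T.1 ⊆ U.1 then (1:ℝ) else 0)
        = if S.1 ∪ T.1 ⊆ U.1 then (1:ℝ) else 0 := by
    intro U
    by_cases h1 : S.1 ⊆ U.1 <;> by_cases h2 : T.1 ⊆ U.1 <;>
      simp [h1, h2, Finset.union_subset_iff]
  have hlhs : ((W n r)ᵀ * W n r) S T
      = ((Finset.univ.filter (fun U : K n (r+1) => S.1 ∪ T.1 ⊆ U.1)).card : ℕ) := by
    rw [Matrix.mul_apply]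
    simp only [W, Matrix.transpose_apply]
    rw [Finset.sum_congr rfl (fun U _ => hsum U)]
    rw [Finset.sum_boole]
  rw [hlhs]
  have key := card_symmDiff_key S.1 T.1
  have key2 := Finset.card_union_add_card_inter S.1 T.1
  rw [S.2, T.2] at key key2
  have hle : (S.1 ∩ T.1).card ≤ r := by
    have h : (S.1 ∩ T.1).card ≤ S.1.card := Finset.card_le_card Finset.inter_subset_left
    rw [S.2] at h; exact h
  simp only [Matrix.add_apply, SimpleGraph.adjMatrix_apply, Matrix.smul_apply,
    Matrix.one_apply, smul_eq_mul]
  by_cases hST : S = T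
  · subst hST
    have hAdj : ¬ (johnsonGraph n r).Adj S S := (johnsonGraph n r).loopless.irrefl S
    rw [if_neg hAdj, if_pos rfl]
    have hX : (S.1 ∪ S.1).card = r := by rw [Finset.union_self, S.2]
    rw [card_supersets (r+1) _ (by omega), hX]
    have : r + 1 - r = 1 := by omega
    rw [this, Nat.choose_one_right]
    have hrn' : r ≤ n := by omega
    push_cast [Nat.cast_sub hrn']
    ring
  · by_cases hAdj : (johnsonGraph n r).Adj S T
    · have h2 : (S.1 ∆ T.1).card = 2 := hAdj
      have hX : (S.1 ∪ T.1).card = r + 1 := by omega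
      rw [if_pos hAdj, if_neg hST, card_supersets (r+1) _ (by omega), hX]
      simp
    · have h2 : (S.1 ∆ T.1).card ≠ 2 := hAdj
      have hne : (S.1 ∩ T.1).card ≠ r := fun h => hST (inter_eq_of_card S T h)
      have hX : r + 2 ≤ (S.1 ∪ T.1).card := by omega
      have hempty : (Finset.univ.filter (fun U : K n (r+1) => S.1 ∪ T.1 ⊆ U.1)) = ∅ := by
        rw [Finset.filter_eq_empty_iff]
        intro U _
        intro hsub
        have := Finset.card_le_card hsub
        rw [U.2] at this
        omega
      rw [if_neg hAdj, if_neg hST, hempty]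
      simp

lemma choose_lt {n r : ℕ} (h : 2 * (r + 1) ≤ n) : n.choose r < n.choose (r + 1) := by
  have h1 := Nat.choose_succ_right_eq n r
  have h2 : 0 < n.choose r := Nat.choose_pos (by omega)
  have h3 : r + 2 ≤ n - r := by omega
  nlinarith [Nat.mul_le_mul_left (n.choose r) h3]

lemma key_lemma (n : ℕ) : ∀ r : ℕ, 2 * r ≤ n → ∀ μ : ℝ,
    (μ ∈ spectrum ℝ ((johnsonGraph n r).adjMatrix ℝ) ↔
      ∃ j : ℕ, j ≤ r ∧ μ = ((r : ℝ) - j) * ((n : ℝ) - r - j) - j) := by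
  intro r
  induction r with
  | zero =>
    intro _ μ
    have hzero : (johnsonGraph n 0).adjMatrix ℝ = 0 := by
      ext S T
      have : S = T := Subtype.ext (by
        rw [Finset.card_eq_zero.mp S.2, Finset.card_eq_zero.mp T.2])
      subst this
      simp [SimpleGraph.adjMatrix_apply]
    rw [hzero, mem_spectrum_iff_exists]
    constructor
    · rintro ⟨v, hv, h⟩
      rw [Matrix.zero_mulVec] at h
      have : μ = 0 := by
        rcases smul_eq_zero.mp h.symm with h' | h'
        · exact h'
        · exact absurd h' hv
      exact ⟨0, le_refl 0, by simp [this]⟩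
    · rintro ⟨j, hj, hμ⟩
      interval_cases j
      have hμ0 : μ = 0 := by rw [hμ]; push_cast; ring
      refine ⟨fun _ => 1, ?_, ?_⟩
      · intro h
        have := congrFun h ⟨∅, Finset.card_empty⟩
        simp at this
      · rw [Matrix.zero_mulVec, hμ0, zero_smul]
  | succ r ih =>
    intro h2 μ
    have ihr := ih (by omega)
    set Wm := W n r with hWm
    have hA := W_mul_Wt (n := n) r
    have hB := Wt_mul_W (n := n) r (by omega)
    rw [mem_spectrum_iff_exists]
    constructor
    · rintro ⟨v, hv0, hv⟩
      have hWWt : (Wm * Wmᵀ).mulVec v = (μ + ((r:ℝ)+1)) • v := by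
        rw [hA, Matrix.add_mulVec, hv, Matrix.smul_mulVec, Matrix.one_mulVec]
        module
      by_cases hν : μ + ((r:ℝ)+1) = 0
      · refine ⟨r + 1, le_refl _, ?_⟩
        push_cast
        linarith
      · set w := Wmᵀ.mulVec v with hw
        have hwv : (Wmᵀ * Wm).mulVec w = (μ + ((r:ℝ)+1)) • w := by
          rw [hw, Matrix.mulVec_mulVec, Matrix.mul_assoc, ← Matrix.mulVec_mulVec, hWWt,
            Matrix.mulVec_smul]
        have hw0 : w ≠ 0 := by
          intro h
          have : Wm.mulVec w = 0 := by rw [h, Matrix.mulVec_zero]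
          rw [hw, Matrix.mulVec_mulVec, hWWt] at this
          exact hν (by
            by_contra h'
            exact hv0 ((smul_eq_zero.mp this).resolve_left h'))
        have hAw : ((johnsonGraph n r).adjMatrix ℝ).mulVec w
            = (μ + ((r:ℝ)+1) - ((n:ℝ) - r)) • w := by
          have : (johnsonGraph n r).adjMatrix ℝ
              = Wmᵀ * Wm - ((n:ℝ) - r) • 1 := by rw [hB]; ring_nf; abel
          rw [this, Matrix.sub_mulVec, hwv, Matrix.smul_mulVec, Matrix.one_mulVec]
          module
        have hmem : (μ + ((r:ℝ)+1) - ((n:ℝ) - r)) ∈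
            spectrum ℝ ((johnsonGraph n r).adjMatrix ℝ) := by
          rw [mem_spectrum_iff_exists]; exact ⟨w, hw0, hAw⟩
        obtain ⟨j, hj, hjeq⟩ := (ihr _).mp hmem
        refine ⟨j, by omega, ?_⟩
        push_cast
        linear_combination hjeq
    · rintro ⟨j, hj, hμ⟩
      by_cases hjr : j = r + 1
      · subst hjr
        have hμ0 : μ = -((r:ℝ)+1) := by rw [hμ]; push_cast; ring
        have hdet : (Wm * Wmᵀ).det = 0 := by
          by_contra hdet
          have hu : IsUnit (Wm * Wmᵀ) :=
            (Matrix.isUnit_iff_isUnit_det _).mpr (isUnit_iff_ne_zero.mpr hdet)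
          have hrank := Matrix.rank_of_isUnit _ hu
          have hle1 : (Wm * Wmᵀ).rank ≤ Wm.rank := Matrix.rank_mul_le_left _ _
          have hle2 : Wm.rank ≤ Fintype.card (K n r) := Matrix.rank_le_card_width _
          have hc1 : Fintype.card (K n r) = n.choose r := by
            rw [Fintype.card_finset_len, Fintype.card_fin]
          have hc2 : Fintype.card (K n (r+1)) = n.choose (r+1) := by
            rw [Fintype.card_finset_len, Fintype.card_fin]
          have := choose_lt h2
          omega
        obtain ⟨v, hv0, hv⟩ := (Matrix.exists_mulVec_eq_zero_iff).mpr hdet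
        refine ⟨v, hv0, ?_⟩
        have : ((johnsonGraph n (r+1)).adjMatrix ℝ)
            = Wm * Wmᵀ - ((r:ℝ)+1) • 1 := by rw [hA]; ring_nf; abel
        rw [this, Matrix.sub_mulVec, hv, Matrix.smul_mulVec, Matrix.one_mulVec,
          zero_sub, hμ0]
        module
      · have hjr' : j ≤ r := by omega
        obtain ⟨w, hw0, hw⟩ := (mem_spectrum_iff_exists _ _).mp
          ((ihr _).mpr ⟨j, hjr', rfl⟩)
        set ν : ℝ := (((r:ℝ) - j) * ((n:ℝ) - r - j) - j) + ((n:ℝ) - r) with hν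
        have hνpos : 0 < ν := by
          have hjle : (j:ℝ) ≤ (r:ℝ) := by exact_mod_cast hjr'
          have hn : (2*r + 2 : ℝ) ≤ (n:ℝ) := by exact_mod_cast h2
          have hfact : ν = ((r:ℝ) + 1 - j) * ((n:ℝ) - r - j) := by rw [hν]; ring
          rw [hfact]
          apply mul_pos <;> linarith
        have hwv : (Wmᵀ * Wm).mulVec w = ν • w := by
          rw [hB, Matrix.add_mulVec, hw, Matrix.smul_mulVec, Matrix.one_mulVec, hν]
          module
        set v := Wm.mulVec w with hvdef
        have hv0 : v ≠ 0 := by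
          intro h
          have : Wmᵀ.mulVec v = 0 := by rw [h, Matrix.mulVec_zero]
          rw [hvdef, Matrix.mulVec_mulVec, hwv] at this
          rcases smul_eq_zero.mp this with h' | h'
          · linarith
          · exact hw0 h'
        have hvv : (Wm * Wmᵀ).mulVec v = ν • v := by
          rw [hvdef, Matrix.mulVec_mulVec, Matrix.mul_assoc, ← Matrix.mulVec_mulVec, hwv,
            Matrix.mulVec_smul]
        refine ⟨v, hv0, ?_⟩
        have hAv : ((johnsonGraph n (r+1)).adjMatrix ℝ).mulVec v = (ν - ((r:ℝ)+1)) • v := by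
          have : ((johnsonGraph n (r+1)).adjMatrix ℝ)
              = Wm * Wmᵀ - ((r:ℝ)+1) • 1 := by rw [hA]; ring_nf; abel
          rw [this, Matrix.sub_mulVec, hvv, Matrix.smul_mulVec, Matrix.one_mulVec]
          module
        rw [hAv]
        congr 1
        rw [hμ, hν]
        push_cast
        ring

end JohnsonAux

theorem johnsonGraph_adjMatrix_eigenvalues (n r : ℕ) (h1 : 1 ≤ r) (h2 : 2 * r ≤ n)
    (μ : ℝ) :
    μ ∈ spectrum ℝ ((johnsonGraph n r).adjMatrix ℝ) ↔
      ∃ j : ℕ, j ≤ r ∧ μ = ((r : ℝ) - j) * ((n : ℝ) - r - j) - j := by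
  exact JohnsonAux.key_lemma n r h2 μ
end

section
/- Let H be a real inner product space, let μ and ν be orthonormal vectors in H, let φ ∈ (0, π/2), and set π = (sin φ) μ + (cos φ) ν. Write ref(w) = 2⟨w,·⟩w − Id for the reflection through the line spanned by a unit vector w, and let R = ref(π) ∘ ref(ν). Then for every natural number t, R^t π = sin((2t+1)φ) μ + cos((2t+1)φ) ν; that is, R acts on the plane spanned by μ and ν as a rotation by angle 2φ. -/
/-- The reflection `ref(w) = 2⟨w,·⟩w − Id` through the line spanned by `w`. -/
noncomputable def refLine {H : Type*} [NormedAddCommGroup H] [InnerProductSpace ℝ H]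
    (w : H) : H → H := fun v => (2 * (inner ℝ w v : ℝ)) • w - v

lemma grover_step {H : Type*} [NormedAddCommGroup H] [InnerProductSpace ℝ H]
    (μ ν : H) (hμ : ‖μ‖ = 1) (hν : ‖ν‖ = 1) (horth : (inner ℝ μ ν : ℝ) = 0)
    (φ θ : ℝ) (p : H) (hp : p = Real.sin φ • μ + Real.cos φ • ν) :
    (refLine p ∘ refLine ν) (Real.sin θ • μ + Real.cos θ • ν) =
      Real.sin (θ + 2 * φ) • μ + Real.cos (θ + 2 * φ) • ν := by
  have hμμ : (inner ℝ μ μ : ℝ) = 1 := by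
    rw [real_inner_self_eq_norm_sq, hμ]; norm_num
  have hνν : (inner ℝ ν ν : ℝ) = 1 := by
    rw [real_inner_self_eq_norm_sq, hν]; norm_num
  have hνμ : (inner ℝ ν μ : ℝ) = 0 := by rw [real_inner_comm]; exact horth
  simp only [Function.comp, refLine, hp, inner_add_right, inner_smul_right,
    inner_add_left, inner_smul_left, inner_sub_right, hμμ, hνν, horth, hνμ,
    conj_trivial, smul_sub, smul_add, smul_smul]
  rw [Real.sin_add, Real.cos_add, Real.sin_two_mul, Real.cos_two_mul']
  match_scalars
  · linear_combination (-Real.sin θ) * Real.sin_sq_add_cos_sq φ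
  · linear_combination Real.cos θ * Real.sin_sq_add_cos_sq φ

theorem grover_rotation {H : Type*} [NormedAddCommGroup H] [InnerProductSpace ℝ H]
    (μ ν : H) (hμ : ‖μ‖ = 1) (hν : ‖ν‖ = 1) (horth : (inner ℝ μ ν : ℝ) = 0)
    (φ : ℝ) (hφ : φ ∈ Set.Ioo 0 (Real.pi / 2))
    (p : H) (hp : p = Real.sin φ • μ + Real.cos φ • ν) (t : ℕ) :
    (refLine p ∘ refLine ν)^[t] p =
      Real.sin ((2 * t + 1) * φ) • μ + Real.cos ((2 * t + 1) * φ) • ν := by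
  induction t with
  | zero => simpa using hp
  | succ n ih =>
      rw [Function.iterate_succ_apply', ih,
        grover_step μ ν hμ hν horth φ _ p hp]
      push_cast
      ring_nf
end
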